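/- arXiv:1507.03432 — 2 statements merged into one kernel-verified Lean document; each statement's English description precedes it below -/
import Mathlib

section
/- Let D : ℝ² → Matrix (Fin 3) (Fin 3) ℝ be twice continuously differentiable in (s,t) with D(s,t) invertible for all (s,t), and let ω, κ : ℝ² → ℝ³ be continuously differentiable, such that ∂_tD = −[ω]_× · D and ∂_sD = −[κ]_× · D hold everywhere, where [a]_× denotes the 3×3 matrix with [a]_× x = a × x (cross product in ℝ³). Then the compatibility condition ∂_t κ = ∂_s ω + κ × ω holds everywhere. -/
noncomputable section

/-- Cross product on `ℝ³`. -/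
def cross3 (a b : Fin 3 → ℝ) : Fin 3 → ℝ :=
  ![a 1 * b 2 - a 2 * b 1, a 2 * b 0 - a 0 * b 2, a 0 * b 1 - a 1 * b 0]

/-- The cross-product matrix `[a]_×` with `[a]_× x = a × x`. -/
def crossMat (a : Fin 3 → ℝ) : Matrix (Fin 3) (Fin 3) ℝ :=
  !![0, -a 2, a 1; a 2, 0, -a 0; -a 1, a 0, 0]

/-- Partial derivative with respect to the time variable `t` (second component). -/
def pt {E : Type*} [NormedAddCommGroup E] [NormedSpace ℝ E]
    (f : ℝ × ℝ → E) (p : ℝ × ℝ) : E :=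
  deriv (fun t => f (p.1, t)) p.2

/-- Partial derivative with respect to the space variable `s` (first component). -/
def ps {E : Type*} [NormedAddCommGroup E] [NormedSpace ℝ E]
    (f : ℝ × ℝ → E) (p : ℝ × ℝ) : E :=
  deriv (fun s => f (s, p.2)) p.1

/-- Entrywise `t`-partial derivative of a matrix-valued field. -/
def ptM (D : ℝ × ℝ → Matrix (Fin 3) (Fin 3) ℝ) (p : ℝ × ℝ) : Matrix (Fin 3) (Fin 3) ℝ :=
  Matrix.of fun i j => deriv (fun t => D (p.1, t) i j) p.2

/-- Entrywise `s`-partial derivative of a matrix-valued field. -/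
def psM (D : ℝ × ℝ → Matrix (Fin 3) (Fin 3) ℝ) (p : ℝ × ℝ) : Matrix (Fin 3) (Fin 3) ℝ :=
  Matrix.of fun i j => deriv (fun s => D (s, p.2) i j) p.1

/- ### Auxiliary lemmas -/

lemma crossMat_add (a b : Fin 3 → ℝ) : crossMat (a + b) = crossMat a + crossMat b := by
  ext i j; fin_cases i <;> fin_cases j <;> simp [crossMat] <;> ring

lemma crossMat_comm (a b : Fin 3 → ℝ) :
    crossMat (cross3 a b) = crossMat a * crossMat b - crossMat b * crossMat a := by
  ext i j
  fin_cases i <;> fin_cases j <;>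
    simp [crossMat, cross3, Matrix.mul_apply, Fin.sum_univ_three] <;> ring

lemma crossMat_inj {a b : Fin 3 → ℝ} (h : crossMat a = crossMat b) : a = b := by
  funext m
  fin_cases m
  · have := congrFun (congrFun h 2) 1; simpa [crossMat] using this
  · have := congrFun (congrFun h 0) 2; simpa [crossMat] using this
  · have := congrFun (congrFun h 1) 0; simpa [crossMat] using this

lemma crossMat_hasDerivAt {f : ℝ → Fin 3 → ℝ} {f' : Fin 3 → ℝ} {x : ℝ}
    (hf : HasDerivAt f f' x) (i k : Fin 3) :
    HasDerivAt (fun s => crossMat (f s) i k) (crossMat f' i k) x := by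
  have h := hasDerivAt_pi.mp hf
  fin_cases i <;> fin_cases k <;> simp [crossMat] <;>
    first
      | exact hasDerivAt_const _ _
      | exact h _
      | exact (h _).neg

section helpers
variable {E : Type*} [NormedAddCommGroup E] [NormedSpace ℝ E]

lemma lineS_hasDerivAt {f : ℝ × ℝ → E} (hf : Differentiable ℝ f) (p : ℝ × ℝ) :
    HasDerivAt (fun s => f (s, p.2)) (ps f p) p.1 := by
  have h : DifferentiableAt ℝ (fun s => f (s, p.2)) p.1 :=
    (hf (p.1, p.2)).comp p.1 (differentiableAt_id.prodMk (differentiableAt_const _))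
  exact h.hasDerivAt

lemma lineT_hasDerivAt {f : ℝ × ℝ → E} (hf : Differentiable ℝ f) (p : ℝ × ℝ) :
    HasDerivAt (fun t => f (p.1, t)) (pt f p) p.2 := by
  have h : DifferentiableAt ℝ (fun t => f (p.1, t)) p.2 :=
    (hf (p.1, p.2)).comp p.2 ((differentiableAt_const _).prodMk differentiableAt_id)
  exact h.hasDerivAt

lemma lineS_fderiv {f : ℝ × ℝ → E} {L : (ℝ × ℝ) →L[ℝ] E} {p : ℝ × ℝ}
    (hf : HasFDerivAt f L p) :
    HasDerivAt (fun s => f (s, p.2)) (L (1, 0)) p.1 := by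
  have hline : HasDerivAt (fun s : ℝ => ((s, p.2) : ℝ × ℝ)) ((1 : ℝ), (0 : ℝ)) p.1 :=
    (hasDerivAt_id p.1).prodMk (hasDerivAt_const _ _)
  exact hf.comp_hasDerivAt p.1 hline

lemma lineT_fderiv {f : ℝ × ℝ → E} {L : (ℝ × ℝ) →L[ℝ] E} {p : ℝ × ℝ}
    (hf : HasFDerivAt f L p) :
    HasDerivAt (fun t => f (p.1, t)) (L (0, 1)) p.2 := by
  have hline : HasDerivAt (fun t : ℝ => ((p.1, t) : ℝ × ℝ)) ((0 : ℝ), (1 : ℝ)) p.2 :=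
    (hasDerivAt_const _ _).prodMk (hasDerivAt_id p.2)
  exact hf.comp_hasDerivAt p.2 hline

lemma pt_eq_fderiv {f : ℝ × ℝ → E} (hf : Differentiable ℝ f) (q : ℝ × ℝ) :
    pt f q = fderiv ℝ f q (0, 1) :=
  (lineT_fderiv (hf q).hasFDerivAt).deriv

lemma ps_eq_fderiv {f : ℝ × ℝ → E} (hf : Differentiable ℝ f) (q : ℝ × ℝ) :
    ps f q = fderiv ℝ f q (1, 0) :=
  (lineS_fderiv (hf q).hasFDerivAt).deriv

/-- Clairaut's theorem (symmetry of second partial derivatives) for `C²` maps on `ℝ²`. -/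
lemma clairaut {f : ℝ × ℝ → E} (hf : ContDiff ℝ 2 f) (p : ℝ × ℝ) :
    ps (pt f) p = pt (ps f) p := by
  have hdiff : Differentiable ℝ f := hf.differentiable two_ne_zero
  have hf1 : ContDiff ℝ 1 (fderiv ℝ f) := hf.fderiv_right le_rfl
  have hf'' : HasFDerivAt (fderiv ℝ f) (fderiv ℝ (fderiv ℝ f) p) p :=
    (hf1.differentiable one_ne_zero p).hasFDerivAt
  have hsymm := second_derivative_symmetric (fun y => (hdiff y).hasFDerivAt) hf''
      ((0 : ℝ), (1 : ℝ)) ((1 : ℝ), (0 : ℝ))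
  have e1 : ps (pt f) p = fderiv ℝ (fderiv ℝ f) p (1, 0) (0, 1) := by
    have happ : HasFDerivAt (fun q => fderiv ℝ f q (0, 1))
        ((ContinuousLinearMap.apply ℝ E ((0 : ℝ), (1 : ℝ))).comp
          (fderiv ℝ (fderiv ℝ f) p)) p :=
      (ContinuousLinearMap.apply ℝ E ((0 : ℝ), (1 : ℝ))).hasFDerivAt.comp p hf''
    have h2 := lineS_fderiv happ
    have heq : (fun s => pt f (s, p.2)) = fun s => fderiv ℝ f (s, p.2) (0, 1) := by
      funext s; exact pt_eq_fderiv hdiff (s, p.2)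
    show deriv (fun s => pt f (s, p.2)) p.1 = _
    rw [heq, h2.deriv]; rfl
  have e2 : pt (ps f) p = fderiv ℝ (fderiv ℝ f) p (0, 1) (1, 0) := by
    have happ : HasFDerivAt (fun q => fderiv ℝ f q (1, 0))
        ((ContinuousLinearMap.apply ℝ E ((1 : ℝ), (0 : ℝ))).comp
          (fderiv ℝ (fderiv ℝ f) p)) p :=
      (ContinuousLinearMap.apply ℝ E ((1 : ℝ), (0 : ℝ))).hasFDerivAt.comp p hf''
    have h2 := lineT_fderiv happ
    have heq : (fun t => ps f (p.1, t)) = fun t => fderiv ℝ f (p.1, t) (1, 0) := by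
      funext t; exact ps_eq_fderiv hdiff (p.1, t)
    show deriv (fun t => ps f (p.1, t)) p.2 = _
    rw [heq, h2.deriv]; rfl
  rw [e1, e2, hsymm]
end helpers

/-- The second compatibility condition of the Cosserat rod theory:
if `D` is twice continuously differentiable, pointwise invertible, and satisfies
`∂_tD = −[ω]_×·D` and `∂_sD = −[κ]_×·D` with `ω`, `κ` continuously differentiable,
then `∂_tκ = ∂_sω + κ × ω`. -/
theorem compatibility_condition_triad
    (D : ℝ × ℝ → Matrix (Fin 3) (Fin 3) ℝ)
    (hD : ∀ i j : Fin 3, ContDiff ℝ 2 (fun p : ℝ × ℝ => D p i j))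
    (hDinv : ∀ p : ℝ × ℝ, IsUnit (D p))
    (ω κ : ℝ × ℝ → Fin 3 → ℝ) (hω : ContDiff ℝ 1 ω) (hκ : ContDiff ℝ 1 κ)
    (hDt : ∀ p : ℝ × ℝ, ptM D p = -(crossMat (ω p)) * D p)
    (hDs : ∀ p : ℝ × ℝ, psM D p = -(crossMat (κ p)) * D p) :
    ∀ p : ℝ × ℝ, pt κ p = ps ω p + cross3 (κ p) (ω p) := by
  intro p
  have hωd : Differentiable ℝ ω := hω.differentiable one_ne_zero
  have hκd : Differentiable ℝ κ := hκ.differentiable one_ne_zero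
  have Dd : ∀ i j : Fin 3, Differentiable ℝ (fun q => D q i j) := fun i j =>
    (hD i j).differentiable two_ne_zero
  -- entrywise forms of the two PDEs
  have keyT : ∀ (q : ℝ × ℝ) (i j : Fin 3),
      pt (fun r => D r i j) q = -(∑ k, crossMat (ω q) i k * D q k j) := by
    intro q i j
    have h := congrFun (congrFun (hDt q) i) j
    simpa [ptM, pt, Matrix.mul_apply, Matrix.neg_apply, neg_mul,
      Finset.sum_neg_distrib] using h
  have keyS : ∀ (q : ℝ × ℝ) (i j : Fin 3),
      ps (fun r => D r i j) q = -(∑ k, crossMat (κ q) i k * D q k j) := by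
    intro q i j
    have h := congrFun (congrFun (hDs q) i) j
    simpa [psM, ps, Matrix.mul_apply, Matrix.neg_apply, neg_mul,
      Finset.sum_neg_distrib] using h
  -- mixed partials, computed in both orders
  have hA : ∀ i j : Fin 3, ps (pt (fun r => D r i j)) p =
      -(∑ k, (crossMat (ps ω p) i k * D p k j +
              crossMat (ω p) i k * ps (fun r => D r k j) p)) := by
    intro i j
    have hderiv : HasDerivAt
        (fun s => -(∑ k, crossMat (ω (s, p.2)) i k * D (s, p.2) k j))
        (-(∑ k, (crossMat (ps ω p) i k * D p k j +
                crossMat (ω p) i k * ps (fun r => D r k j) p))) p.1 := by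
      exact (HasDerivAt.fun_sum (fun k _ =>
        (crossMat_hasDerivAt (lineS_hasDerivAt hωd p) i k).fun_mul
          (lineS_hasDerivAt (Dd k j) p))).fun_neg
    have heq : (fun s => pt (fun r => D r i j) (s, p.2)) =
        fun s => -(∑ k, crossMat (ω (s, p.2)) i k * D (s, p.2) k j) := by
      funext s; exact keyT (s, p.2) i j
    show deriv (fun s => pt (fun r => D r i j) (s, p.2)) p.1 = _
    rw [heq, hderiv.deriv]
  have hB : ∀ i j : Fin 3, pt (ps (fun r => D r i j)) p =
      -(∑ k, (crossMat (pt κ p) i k * D p k j +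
              crossMat (κ p) i k * pt (fun r => D r k j) p)) := by
    intro i j
    have hderiv : HasDerivAt
        (fun t => -(∑ k, crossMat (κ (p.1, t)) i k * D (p.1, t) k j))
        (-(∑ k, (crossMat (pt κ p) i k * D p k j +
                crossMat (κ p) i k * pt (fun r => D r k j) p))) p.2 := by
      exact (HasDerivAt.fun_sum (fun k _ =>
        (crossMat_hasDerivAt (lineT_hasDerivAt hκd p) i k).fun_mul
          (lineT_hasDerivAt (Dd k j) p))).fun_neg
    have heq : (fun t => ps (fun r => D r i j) (p.1, t)) =
        fun t => -(∑ k, crossMat (κ (p.1, t)) i k * D (p.1, t) k j) := by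
      funext t; exact keyS (p.1, t) i j
    show deriv (fun t => ps (fun r => D r i j) (p.1, t)) p.2 = _
    rw [heq, hderiv.deriv]
  -- combine via Clairaut, substituting the PDEs once more
  have hcomb : ∀ i j : Fin 3,
      ∑ k, (crossMat (pt κ p) i k * D p k j +
            crossMat (κ p) i k * (-(∑ l, crossMat (ω p) k l * D p l j))) =
      ∑ k, (crossMat (ps ω p) i k * D p k j +
            crossMat (ω p) i k * (-(∑ l, crossMat (κ p) k l * D p l j))) := by
    intro i j
    have h := (hA i j).symm.trans ((clairaut (hD i j) p).trans (hB i j))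
    have h' := neg_injective h
    calc ∑ k, (crossMat (pt κ p) i k * D p k j +
            crossMat (κ p) i k * (-(∑ l, crossMat (ω p) k l * D p l j)))
        = ∑ k, (crossMat (pt κ p) i k * D p k j +
            crossMat (κ p) i k * pt (fun r => D r k j) p) := by
          refine Finset.sum_congr rfl fun k _ => ?_
          rw [keyT p k j]
      _ = ∑ k, (crossMat (ps ω p) i k * D p k j +
            crossMat (ω p) i k * ps (fun r => D r k j) p) := h'.symm
      _ = _ := by
          refine Finset.sum_congr rfl fun k _ => ?_
          rw [keyS p k j]
  -- matrix form of the combined equation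
  have hmat : (crossMat (pt κ p) - crossMat (κ p) * crossMat (ω p)) * D p =
      (crossMat (ps ω p) - crossMat (ω p) * crossMat (κ p)) * D p := by
    ext i j
    have h := hcomb i j
    simp only [Fin.sum_univ_three, Matrix.mul_apply, Matrix.sub_apply] at h ⊢
    ring_nf at h ⊢
    linarith [h]
  -- cancel the invertible matrix
  obtain ⟨u, hu⟩ := hDinv p
  have hXY : crossMat (pt κ p) - crossMat (κ p) * crossMat (ω p) =
      crossMat (ps ω p) - crossMat (ω p) * crossMat (κ p) := by
    set X := crossMat (pt κ p) - crossMat (κ p) * crossMat (ω p) with hX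
    set Y := crossMat (ps ω p) - crossMat (ω p) * crossMat (κ p) with hY
    rw [← hu] at hmat
    calc X = X * ↑u * ↑u⁻¹ := by rw [mul_assoc, u.mul_inv, mul_one]
      _ = Y * ↑u * ↑u⁻¹ := by rw [hmat]
      _ = Y := by rw [mul_assoc, u.mul_inv, mul_one]
  have hfinal : crossMat (pt κ p) = crossMat (ps ω p + cross3 (κ p) (ω p)) := by
    rw [crossMat_add, crossMat_comm]
    have := hXY
    abel_nf at this ⊢
    linear_combination (norm := noncomm_ring) this
  exact crossMat_inj hfinal
end
end

section
/- Let μ > 0, a > 0, and set P = diag(1, 1, 2/a) (3×3 real matrix). Let r̆, v, ω, n, κ : ℝ² → ℝ³ be continuously differentiable in (s,t), let τ̊ : ℝ → ℝ³, let D : ℝ² → Matrix (Fin 3) (Fin 3) ℝ with D(s,t)·D(s,t)ᵀ = 1 for all (s,t), and let V : ℝ³ → ℝ be continuously differentiable. Suppose the Kirchhoff limit system holds everywhere: D·∂_t r̆ = v; 0 = ∂_s v + κ × v + τ̊ × ω; ∂_tκ = ∂_sω + κ × ω; ∂_t v = ∂_s n + κ × n + v × ω + D·(−∇V(r̆)); and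 0 = ∂_s m + κ × m + τ̊ × n, where m := μ⁻²P·κ. Then the energy density w⁰ := ½‖v‖² + (2μ²)⁻¹ κ·(P·κ) + V(r̆) satisfies the local energy balance ∂_t w⁰ = ∂_s (v·n + ω·m) everywhere. -/
/-!
Differentiate `w⁰` in `t` and the flux `v·n + ω·m` in `s` by the product and chain rules and
substitute the equations of the system. As `P` is symmetric, `∂ₜ(κ·Pκ)/2 = ∂ₜκ·Pκ`; as `D` is
orthogonal, the kinematic equation reads `∂ₜr̆ = Dᵀv`, so `∇V·∂ₜr̆` cancels the power `D(-∇V)·v`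
of the external force. All remaining terms cancel in pairs, because `u ↦ a × u` is
skew-adjoint and `v·(v × ω) = 0`.
-/

open Matrix

noncomputable section

def grad3 (V : (Fin 3 → ℝ) → ℝ) (x : Fin 3 → ℝ) : Fin 3 → ℝ :=
  fun i => fderiv ℝ V x (Pi.single i 1)

section PartialDerivatives

variable {E : Type*} [NormedAddCommGroup E] [NormedSpace ℝ E] {f : ℝ × ℝ → E} {p : ℝ × ℝ}

theorem hasDerivAt_pt (hf : DifferentiableAt ℝ f p) :
    HasDerivAt (fun t => f (p.1, t)) (pt f p) p.2 :=
  (hf.comp p.2 ((differentiableAt_const _).prodMk differentiableAt_id)).hasDerivAt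

theorem hasDerivAt_ps (hf : DifferentiableAt ℝ f p) :
    HasDerivAt (fun s => f (s, p.2)) (ps f p) p.1 :=
  (hf.comp p.1 (differentiableAt_id.prodMk (differentiableAt_const _))).hasDerivAt

end PartialDerivatives

section VectorCalculus

variable {ι : Type*} [Fintype ι] {f g : ℝ → ι → ℝ} {f' g' : ι → ℝ} {x : ℝ}

theorem HasDerivAt.dotProduct (hf : HasDerivAt f f' x) (hg : HasDerivAt g g' x) :
    HasDerivAt (fun t => f t ⬝ᵥ g t) (f' ⬝ᵥ g x + f x ⬝ᵥ g') x := by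
  simp only [_root_.dotProduct]
  rw [← Finset.sum_add_distrib]
  exact HasDerivAt.fun_sum fun i _ => (hasDerivAt_pi.mp hf i).mul (hasDerivAt_pi.mp hg i)

theorem HasDerivAt.mulVec {m : Type*} (A : Matrix m ι ℝ) (hf : HasDerivAt f f' x) :
    HasDerivAt (fun t => A *ᵥ f t) (A *ᵥ f') x :=
  hasDerivAt_pi.mpr fun i =>
    HasDerivAt.fun_sum fun j _ => (hasDerivAt_pi.mp hf j).const_mul (A i j)

theorem DifferentiableAt.mulVec {m E : Type*} [NormedAddCommGroup E] [NormedSpace ℝ E]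
    {F : E → ι → ℝ} {y : E} (A : Matrix m ι ℝ) (hF : DifferentiableAt ℝ F y) :
    DifferentiableAt ℝ (fun z => A *ᵥ F z) y :=
  differentiableAt_pi.mpr fun i =>
    DifferentiableAt.fun_sum fun j _ => (differentiableAt_pi.mp hF j).const_mul (A i j)

theorem Matrix.IsSymm.dotProduct_mulVec_comm {A : Matrix ι ι ℝ} (hA : A.IsSymm) (u w : ι → ℝ) :
    u ⬝ᵥ A *ᵥ w = w ⬝ᵥ A *ᵥ u := by
  rw [dotProduct_mulVec, dotProduct_comm, ← mulVec_transpose, hA.eq]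

end VectorCalculus

theorem fderiv_apply_eq_grad3_dotProduct (V : (Fin 3 → ℝ) → ℝ) (y w : Fin 3 → ℝ) :
    fderiv ℝ V y w = grad3 V y ⬝ᵥ w := by
  conv_lhs => rw [pi_eq_sum_univ' w, map_sum]
  simp only [map_smul, smul_eq_mul, grad3, dotProduct, mul_comm]

theorem HasDerivAt.comp_grad3 {V : (Fin 3 → ℝ) → ℝ} {γ : ℝ → Fin 3 → ℝ} {γ' : Fin 3 → ℝ}
    {x : ℝ} (hγ : HasDerivAt γ γ' x) (hV : DifferentiableAt ℝ V (γ x)) :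
    HasDerivAt (fun t => V (γ t)) (grad3 V (γ x) ⬝ᵥ γ') x := by
  rw [← fderiv_apply_eq_grad3_dotProduct]
  exact hV.hasFDerivAt.comp_hasDerivAt x hγ

theorem cross3_eq_crossProduct (a b : Fin 3 → ℝ) : cross3 a b = a ⨯₃ b :=
  (cross_apply a b).symm

theorem cross_dotProduct_add_dotProduct_cross {R : Type*} [CommRing R] (a b c : Fin 3 → R) :
    a ⨯₃ b ⬝ᵥ c + b ⬝ᵥ a ⨯₃ c = 0 := by
  rw [dotProduct_comm, triple_product_permutation, triple_product_permutation b,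
    ← dotProduct_add, cross_anticomm', dotProduct_zero]

theorem kirchhoff_power_balance {R : Type*} [CommRing R] (D : Matrix (Fin 3) (Fin 3) R)
    {v n ω κ m τ g vt vs ns ωs κt ms rt : Fin 3 → R}
    (hvs : 0 = vs + κ ⨯₃ v + τ ⨯₃ ω) (hκt : κt = ωs + κ ⨯₃ ω)
    (hvt : vt = ns + κ ⨯₃ n + v ⨯₃ ω + D *ᵥ -g) (hms : 0 = ms + κ ⨯₃ m + τ ⨯₃ n)
    (hrt : rt = Dᵀ *ᵥ v) :
    vt ⬝ᵥ v + κt ⬝ᵥ m + g ⬝ᵥ rt = vs ⬝ᵥ n + v ⬝ᵥ ns + (ωs ⬝ᵥ m + ω ⬝ᵥ ms) := by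
  rw [eq_comm, add_assoc, ← eq_neg_iff_add_eq_zero] at hvs hms
  subst hvs hms hκt hvt hrt
  have hpotential : g ⬝ᵥ Dᵀ *ᵥ v = D *ᵥ g ⬝ᵥ v := by
    rw [dotProduct_mulVec, vecMul_transpose]
  simp only [add_dotProduct, dotProduct_add, neg_dotProduct, dotProduct_neg, mulVec_neg,
    hpotential]
  linear_combination cross_dotProduct_add_dotProduct_cross κ n v
    + cross_dotProduct_add_dotProduct_cross κ ω m + cross_dotProduct_add_dotProduct_cross τ ω n
    + dotProduct_comm ns v + dotProduct_comm (κ ⨯₃ v) n + dotProduct_comm (v ⨯₃ ω) v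
    + dot_self_cross v ω

theorem pt_energyDensity {r v κ : ℝ × ℝ → Fin 3 → ℝ} {V : (Fin 3 → ℝ) → ℝ}
    {P : Matrix (Fin 3) (Fin 3) ℝ} (hP : P.IsSymm) (c : ℝ) {p : ℝ × ℝ}
    (hr : DifferentiableAt ℝ r p) (hv : DifferentiableAt ℝ v p) (hκ : DifferentiableAt ℝ κ p)
    (hV : DifferentiableAt ℝ V (r p)) :
    pt (fun q => (1 / 2) * (v q ⬝ᵥ v q) + (2 * c)⁻¹ * (κ q ⬝ᵥ P *ᵥ κ q) + V (r q)) p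
      = pt v p ⬝ᵥ v p + pt κ p ⬝ᵥ (c⁻¹ • P *ᵥ κ p) + grad3 V (r p) ⬝ᵥ pt r p := by
  have hvt := hasDerivAt_pt hv
  have hκt := hasDerivAt_pt hκ
  have h := (((hvt.dotProduct hvt).const_mul (1 / 2)).add
    ((hκt.dotProduct (hκt.mulVec P)).const_mul (2 * c)⁻¹)).add ((hasDerivAt_pt hr).comp_grad3 hV)
  refine h.deriv.trans ?_
  rw [dotProduct_comm (v p), hP.dotProduct_mulVec_comm (κ p), dotProduct_smul, smul_eq_mul]
  ring

theorem ps_powerFlux {v n ω m : ℝ × ℝ → Fin 3 → ℝ} {p : ℝ × ℝ} (hv : DifferentiableAt ℝ v p)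
    (hn : DifferentiableAt ℝ n p) (hω : DifferentiableAt ℝ ω p) (hm : DifferentiableAt ℝ m p) :
    ps (fun q => v q ⬝ᵥ n q + ω q ⬝ᵥ m q) p
      = ps v p ⬝ᵥ n p + v p ⬝ᵥ ps n p + (ps ω p ⬝ᵥ m p + ω p ⬝ᵥ ps m p) :=
  (((hasDerivAt_ps hv).dotProduct (hasDerivAt_ps hn)).add
    ((hasDerivAt_ps hω).dotProduct (hasDerivAt_ps hm))).deriv

theorem kirchhoff_local_energy_balance_general
    (μ a : ℝ)
    (r v ω n κ : ℝ × ℝ → Fin 3 → ℝ)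
    (hr : ContDiff ℝ 1 r) (hv : ContDiff ℝ 1 v) (hω : ContDiff ℝ 1 ω)
    (hn : ContDiff ℝ 1 n) (hκ : ContDiff ℝ 1 κ)
    (τ0 : ℝ → Fin 3 → ℝ)
    (D : ℝ × ℝ → Matrix (Fin 3) (Fin 3) ℝ)
    (hD : ∀ p : ℝ × ℝ, D p * (D p)ᵀ = 1)
    (V : (Fin 3 → ℝ) → ℝ) (hV : ContDiff ℝ 1 V)
    (hkin : ∀ p : ℝ × ℝ, (D p).mulVec (pt r p) = v p)
    (hconstr : ∀ p : ℝ × ℝ,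
      (0 : Fin 3 → ℝ) = ps v p + cross3 (κ p) (v p) + cross3 (τ0 p.1) (ω p))
    (hcompat : ∀ p : ℝ × ℝ, pt κ p = ps ω p + cross3 (κ p) (ω p))
    (hlin : ∀ p : ℝ × ℝ,
      pt v p = ps n p + cross3 (κ p) (n p) + cross3 (v p) (ω p)
        + (D p).mulVec (-(grad3 V (r p))))
    (hang : ∀ p : ℝ × ℝ,
      (0 : Fin 3 → ℝ)
        = ps (fun q => (μ ^ 2)⁻¹ • (Matrix.diagonal ![1, 1, 2 / a]).mulVec (κ q)) p
          + cross3 (κ p) ((μ ^ 2)⁻¹ • (Matrix.diagonal ![1, 1, 2 / a]).mulVec (κ p))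
          + cross3 (τ0 p.1) (n p)) :
    ∀ p : ℝ × ℝ,
      pt (fun q => (1 / 2) * (v q ⬝ᵥ v q)
          + (2 * μ ^ 2)⁻¹ * (κ q ⬝ᵥ (Matrix.diagonal ![1, 1, 2 / a]).mulVec (κ q))
          + V (r q)) p
        = ps (fun q => v q ⬝ᵥ n q
            + ω q ⬝ᵥ ((μ ^ 2)⁻¹ • (Matrix.diagonal ![1, 1, 2 / a]).mulVec (κ q))) p := by
  intro p
  have hrt : pt r p = (D p)ᵀ *ᵥ v p := by
    rw [← hkin p, mulVec_mulVec, mul_eq_one_comm.mp (hD p), one_mulVec]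
  have hm : DifferentiableAt ℝ (fun q => (μ ^ 2)⁻¹ • diagonal ![1, 1, 2 / a] *ᵥ κ q) p :=
    ((hκ.differentiable one_ne_zero p).mulVec _).fun_const_smul _
  rw [pt_energyDensity (isSymm_diagonal _) (μ ^ 2) (hr.differentiable one_ne_zero p)
      (hv.differentiable one_ne_zero p) (hκ.differentiable one_ne_zero p)
      (hV.differentiable one_ne_zero (r p)),
    ps_powerFlux (hv.differentiable one_ne_zero p) (hn.differentiable one_ne_zero p)
      (hω.differentiable one_ne_zero p) hm]
  simp only [cross3_eq_crossProduct] at hconstr hcompat hlin hang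
  exact kirchhoff_power_balance (D p) (hconstr p) (hcompat p) (hlin p) (hang p) hrt

/-- local energy balance for the Kirchhoff limit system:
`∂_t w⁰ = ∂_s (v·n + ω·m)` with `w⁰ = ½‖v‖² + (2μ²)⁻¹κ·(P·κ) + V(r̆)` and
`m = μ⁻²P·κ`, `P = diag(1,1,2/a)`. -/
theorem kirchhoff_local_energy_balance
    (μ a : ℝ) (hμ : 0 < μ) (ha : 0 < a)
    (r v ω n κ : ℝ × ℝ → Fin 3 → ℝ)
    (hr : ContDiff ℝ 1 r) (hv : ContDiff ℝ 1 v) (hω : ContDiff ℝ 1 ω)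
    (hn : ContDiff ℝ 1 n) (hκ : ContDiff ℝ 1 κ)
    (τ0 : ℝ → Fin 3 → ℝ)
    (D : ℝ × ℝ → Matrix (Fin 3) (Fin 3) ℝ)
    (hD : ∀ p : ℝ × ℝ, D p * (D p)ᵀ = 1)
    (V : (Fin 3 → ℝ) → ℝ) (hV : ContDiff ℝ 1 V)
    (hkin : ∀ p : ℝ × ℝ, (D p).mulVec (pt r p) = v p)
    (hconstr : ∀ p : ℝ × ℝ,
      (0 : Fin 3 → ℝ) = ps v p + cross3 (κ p) (v p) + cross3 (τ0 p.1) (ω p))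
    (hcompat : ∀ p : ℝ × ℝ, pt κ p = ps ω p + cross3 (κ p) (ω p))
    (hlin : ∀ p : ℝ × ℝ,
      pt v p = ps n p + cross3 (κ p) (n p) + cross3 (v p) (ω p)
        + (D p).mulVec (-(grad3 V (r p))))
    (hang : ∀ p : ℝ × ℝ,
      (0 : Fin 3 → ℝ)
        = ps (fun q => (μ ^ 2)⁻¹ • (Matrix.diagonal ![1, 1, 2 / a]).mulVec (κ q)) p
          + cross3 (κ p) ((μ ^ 2)⁻¹ • (Matrix.diagonal ![1, 1, 2 / a]).mulVec (κ p))
          + cross3 (τ0 p.1) (n p)) :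
    ∀ p : ℝ × ℝ,
      pt (fun q => (1 / 2) * (v q ⬝ᵥ v q)
          + (2 * μ ^ 2)⁻¹ * (κ q ⬝ᵥ (Matrix.diagonal ![1, 1, 2 / a]).mulVec (κ q))
          + V (r q)) p
        = ps (fun q => v q ⬝ᵥ n q
            + ω q ⬝ᵥ ((μ ^ 2)⁻¹ • (Matrix.diagonal ![1, 1, 2 / a]).mulVec (κ q))) p :=
  kirchhoff_local_energy_balance_general μ a r v ω n κ hr hv hω hn hκ τ0 D hD V hV hkin hconstr
    hcompat hlin hang
end
end
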